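/- The map Λ^α defined by Λ^α(ψ)(t) = ψ(t) − sup_{s ∈ [0,t]} min( max(0, ψ(s) − α), inf_{u ∈ [s,t]} ψ(u) ) satisfies Λ^α(ψ)(t) ≤ α for every bounded function ψ : [0,T] → ℝ with ψ(0) ∈ [0,α] and every t ∈ [0,T], where α > 0. -/
import Mathlib


/-- The map `Λ^α` used in the explicit formula for the two-sided Skorokhod map. -/
noncomputable def LambdaA (α : ℝ) (ψ : ℝ → ℝ) (t : ℝ) : ℝ :=
  ψ t - sSup ((fun s => min (max 0 (ψ s - α)) (sInf (ψ '' Set.Icc s t))) '' Set.Icc 0 t)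

theorem lambdaA_le (T : ℝ) (hT : 0 < T) (α : ℝ) (hα : 0 < α) (ψ : ℝ → ℝ)
    (hψ : ∃ M, ∀ s ∈ Set.Icc (0:ℝ) T, |ψ s| ≤ M)
    (hψ0 : ψ 0 ∈ Set.Icc (0:ℝ) α) :
    ∀ t ∈ Set.Icc (0:ℝ) T, LambdaA α ψ t ≤ α := by
  obtain ⟨M, hM⟩ := hψ
  rintro t ⟨ht0, htT⟩
  have hbdd : BddAbove
      ((fun s => min (max 0 (ψ s - α)) (sInf (ψ '' Set.Icc s t))) '' Set.Icc 0 t) := by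
    refine ⟨ψ t, ?_⟩
    rintro x ⟨s, hs, rfl⟩
    have hsub : Set.Icc s t ⊆ Set.Icc 0 T := Set.Icc_subset_Icc hs.1 htT
    have hbb : BddBelow (ψ '' Set.Icc s t) := by
      refine ⟨-M, ?_⟩
      rintro y ⟨u, hu, rfl⟩
      have := hM u (hsub hu)
      linarith [(abs_le.1 this).1]
    have hmem : ψ t ∈ ψ '' Set.Icc s t := ⟨t, ⟨hs.2, le_refl t⟩, rfl⟩
    exact le_trans (min_le_right _ _) (csInf_le hbb hmem)
  have hmem : min (max 0 (ψ t - α)) (sInf (ψ '' Set.Icc t t)) ∈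
      ((fun s => min (max 0 (ψ s - α)) (sInf (ψ '' Set.Icc s t))) '' Set.Icc 0 t) :=
    ⟨t, ⟨ht0, le_refl t⟩, rfl⟩
  have hsup := le_csSup hbdd hmem
  have hInf : sInf (ψ '' Set.Icc t t) = ψ t := by
    rw [Set.Icc_self, Set.image_singleton, csInf_singleton]
  rw [hInf] at hsup
  have hge : ψ t - α ≤ min (max 0 (ψ t - α)) (ψ t) :=
    le_min (le_max_right _ _) (by linarith)
  unfold LambdaA
  linarith
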